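/- arXiv:2605.20776 — 4 statements merged into one kernel-verified Lean document; each statement's English description precedes it below -/
import Mathlib

section
/- Let H be a fixed finite-dimensional complex Hilbert space, let J be a finite index set, let p : J → ℝ be a probability distribution with p_i > 0 for all i ∈ J, and let each ρ̄_i be a density operator on H. Let ρ⃗ = {ρ_n} be the mixed source ρ_n = Σ_{i∈J} p_i ρ̄_i^{⊗n} on H^{⊗n}, let ρ⃗_i = {ρ̄_i^{⊗n}}, and let σ⃗ = {σ_n} be an arbitrary sequence of density operators on H^{⊗n}. Then D̲(ρ⃗‖σ⃗) ≤ min_{i∈J} D̲(ρ⃗_i‖σ⃗). -/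
open Filter Matrix
open scoped Classical ComplexOrder

noncomputable section

section Defs

variable {ι : Type*} [Fintype ι] [DecidableEq ι]

/-- A density operator: a positive semidefinite operator with unit trace. -/
def IsDensityOp (A : Matrix ι ι ℂ) : Prop := A.PosSemidef ∧ A.trace = 1

/-- A test (POVM element): an operator `T` with `0 ≤ T ≤ I`. -/
def IsTest (T : Matrix ι ι ℂ) : Prop :=
  T.PosSemidef ∧ ((1 : Matrix ι ι ℂ) - T).PosSemidef

/-- An orthogonal projection: a Hermitian idempotent operator. -/
def IsOrthProj (P : Matrix ι ι ℂ) : Prop := P.IsHermitian ∧ P * P = P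

/-- The orthogonal projection `{X ≥ 0}` onto the direct sum of eigenspaces of a Hermitian `X`
with nonnegative eigenvalues (junk value `0` if `X` is not Hermitian). -/
def nnProj (X : Matrix ι ι ℂ) : Matrix ι ι ℂ :=
  if hX : X.IsHermitian then
    (hX.eigenvectorUnitary : Matrix ι ι ℂ) *
      (Matrix.diagonal fun i => if 0 ≤ hX.eigenvalues i then (1 : ℂ) else 0) *
      star (hX.eigenvectorUnitary : Matrix ι ι ℂ)
  else 0

/-- The type-I error `Tr[(I - {ρ - μ σ ≥ 0}) ρ]` of the spectral test. -/
def specErr (ρ σ : Matrix ι ι ℂ) (μ : ℝ) : ℝ :=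
  (((1 : Matrix ι ι ℂ) - nnProj (ρ - (μ : ℂ) • σ)) * ρ).trace.re

/-- Optimal ε-achievable type-II error `β_ε(ρ‖S)` against a set `S` of states. -/
def betaSet (ε : ℝ) (ρ : Matrix ι ι ℂ) (S : Set (Matrix ι ι ℂ)) : ℝ :=
  sInf {x : ℝ | ∃ T : Matrix ι ι ℂ, IsTest T ∧
    (((1 : Matrix ι ι ℂ) - T) * ρ).trace.re ≤ ε ∧
    x = sSup {y : ℝ | ∃ σ ∈ S, y = (T * σ).trace.re}}

/-- `log` of a Hermitian matrix via the functional calculus (with `Real.log 0 = 0`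
on the kernel); junk value `0` if not Hermitian. -/
def hermLog (X : Matrix ι ι ℂ) : Matrix ι ι ℂ :=
  if hX : X.IsHermitian then
    (hX.eigenvectorUnitary : Matrix ι ι ℂ) *
      (Matrix.diagonal fun i => (Real.log (hX.eigenvalues i) : ℂ)) *
      star (hX.eigenvectorUnitary : Matrix ι ι ℂ)
  else 0

/-- Support inclusion `supp ρ ⊆ supp σ`, expressed as kernel inclusion `ker σ ⊆ ker ρ`. -/
def SuppLE (ρ σ : Matrix ι ι ℂ) : Prop :=
  ∀ v : ι → ℂ, σ.mulVec v = 0 → ρ.mulVec v = 0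

/-- Umegaki quantum relative entropy `D(ρ‖σ) = Tr[ρ(log ρ - log σ)]` if `supp ρ ⊆ supp σ`,
and `+∞` otherwise. -/
def relEnt (ρ σ : Matrix ι ι ℂ) : EReal :=
  if SuppLE ρ σ then (((ρ * (hermLog ρ - hermLog σ)).trace.re : ℝ) : EReal) else ⊤

/-- The spectral projection of a Hermitian matrix onto the eigenspace of eigenvalue `μ`. -/
def eigProjAt (X : Matrix ι ι ℂ) (μ : ℝ) : Matrix ι ι ℂ :=
  if hX : X.IsHermitian then
    (hX.eigenvectorUnitary : Matrix ι ι ℂ) *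
      (Matrix.diagonal fun i => if hX.eigenvalues i = μ then (1 : ℂ) else 0) *
      star (hX.eigenvectorUnitary : Matrix ι ι ℂ)
  else 0

/-- The number of distinct eigenvalues of a Hermitian matrix. -/
def distinctEigCount (X : Matrix ι ι ℂ) : ℕ :=
  if hX : X.IsHermitian then (Finset.univ.image hX.eigenvalues).card else 0

/-- The pinching map with respect to `σ`: `ρ ↦ Σ_μ Π_μ ρ Π_μ` over the distinct
eigenvalues `μ` of `σ`. -/
def pinch (σ ρ : Matrix ι ι ℂ) : Matrix ι ι ℂ :=
  if hσ : σ.IsHermitian then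
    ∑ μ ∈ Finset.univ.image hσ.eigenvalues, eigProjAt σ μ * ρ * eigProjAt σ μ
  else ρ

/-- The amplification `id_k ⊗ Φ` of a linear map on operators. -/
def ampl (k : ℕ) (Φ : Matrix ι ι ℂ →ₗ[ℂ] Matrix ι ι ℂ)
    (M : Matrix (Fin k × ι) (Fin k × ι) ℂ) : Matrix (Fin k × ι) (Fin k × ι) ℂ :=
  Matrix.of fun p q => Φ (Matrix.of fun x y => M (p.1, x) (q.1, y)) p.2 q.2

/-- Complete positivity: every amplification `id_k ⊗ Φ` maps positive semidefinite
operators to positive semidefinite operators. -/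
def IsCP (Φ : Matrix ι ι ℂ →ₗ[ℂ] Matrix ι ι ℂ) : Prop :=
  ∀ k : ℕ, ∀ M : Matrix (Fin k × ι) (Fin k × ι) ℂ, M.PosSemidef → (ampl k Φ M).PosSemidef

/-- Trace preservation. -/
def IsTP (Φ : Matrix ι ι ℂ →ₗ[ℂ] Matrix ι ι ℂ) : Prop :=
  ∀ X : Matrix ι ι ℂ, (Φ X).trace = X.trace

end Defs

section SeqDefs

variable {Hn : ℕ → Type*} [∀ n, Fintype (Hn n)] [∀ n, DecidableEq (Hn n)]

/-- The spectral inf-divergence rate `D̲(ε|ρ⃗‖σ⃗)`. -/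
def Dlow (ε : ℝ) (ρ σ : (n : ℕ) → Matrix (Hn n) (Hn n) ℂ) : EReal :=
  sSup ((fun a : ℝ => (a : EReal)) ''
    {a : ℝ | Filter.limsup
      (fun n : ℕ => specErr (ρ n) (σ n) (Real.exp (n * a))) Filter.atTop ≤ ε})

/-- The supremum ε-achievable type-II error exponent `B(ε|ρ⃗‖σ⃗)`. -/
def Bexp (ε : ℝ) (ρ σ : (n : ℕ) → Matrix (Hn n) (Hn n) ℂ) : EReal :=
  sSup {x : EReal | ∃ T : (n : ℕ) → Matrix (Hn n) (Hn n) ℂ,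
    (∀ n, IsTest (T n)) ∧
    Filter.limsup
      (fun n : ℕ => (((1 : Matrix (Hn n) (Hn n) ℂ) - T n) * ρ n).trace.re)
      Filter.atTop ≤ ε ∧
    x = Filter.liminf
      (fun n : ℕ => ((↑(-(1 / (n : ℝ)) * Real.log ((T n * σ n).trace.re))) : EReal))
      Filter.atTop}

end SeqDefs

section TensorDefs

variable {H : Type*} [Fintype H] [DecidableEq H]

/-- The IID tensor power `A^{⊗n}`, acting on `H^{⊗n}` modeled with index type `Fin n → H`. -/
def tpow (A : Matrix H H ℂ) (n : ℕ) : Matrix (Fin n → H) (Fin n → H) ℂ :=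
  Matrix.of fun x y => ∏ k : Fin n, A (x k) (y k)

/-- Tensor product of operators on `H^{⊗n}` and `H^{⊗m}`, as an operator on `H^{⊗(n+m)}`. -/
def mTensor {n m : ℕ} (A : Matrix (Fin n → H) (Fin n → H) ℂ)
    (B : Matrix (Fin m → H) (Fin m → H) ℂ) :
    Matrix (Fin (n + m) → H) (Fin (n + m) → H) ℂ :=
  Matrix.of fun x y =>
    A (fun k => x (Fin.castAdd m k)) (fun k => y (Fin.castAdd m k)) *
      B (fun k => x (Fin.natAdd n k)) (fun k => y (Fin.natAdd n k))

end TensorDefs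

/-- Classical spectral inf-divergence rate (with vanishing type-I error) for sequences of
(finitely supported) distributions on `ℕ`. -/
def cDlow (ρ σ : ℕ → ℕ → ℝ) : EReal :=
  sSup ((fun a : ℝ => (a : EReal)) ''
    {a : ℝ | Filter.limsup
      (fun n : ℕ => ∑' x : ℕ, if ρ n x < Real.exp (n * a) * σ n x then ρ n x else 0)
      Filter.atTop = 0})

/-!
Each component is dominated by the mixture, `ρ_n ≥ p_i ρ̄_i^{⊗n}`, so it suffices to compare two
sequences with `ρ_n ≥ c τ_n`. For the spectral projections `P = {ρ - μσ ≥ 0}` and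
`Q = {τ - μ'σ ≥ 0}`, the Neyman–Pearson optimality of `Q` for `τ - μ'σ`, the domination
`Tr[(I - P)τ] ≤ c⁻¹ Tr[(I - P)ρ]` and `μ Tr[Pσ] ≤ Tr[Pρ] ≤ 1` give
`Tr[(I - Q)τ] ≤ c⁻¹ Tr[(I - P)ρ] + μ'/μ`. With `μ = e^{na}`, `μ' = e^{nb}` and `b < a` the last
term decays geometrically, so every rate `a` achievable for `ρ⃗` makes each `b < a` achievable
for `τ⃗`.
-/

open Topology

namespace Matrix

variable {ι : Type*}

lemma IsHermitian.sub_ofReal_smul {A B : Matrix ι ι ℂ} (hA : A.IsHermitian) (hB : B.IsHermitian)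
    (μ : ℝ) : (A - (μ : ℂ) • B).IsHermitian :=
  hA.sub (hB.smul (Complex.conj_ofReal μ))

variable [Fintype ι]

lemma PosSemidef.re_trace_nonneg {A : Matrix ι ι ℂ} (hA : A.PosSemidef) : 0 ≤ A.trace.re :=
  (Complex.nonneg_iff.mp hA.trace_nonneg).1

lemma PosSemidef.re_trace_mul_nonneg [DecidableEq ι] {A B : Matrix ι ι ℂ} (hA : A.PosSemidef)
    (hB : B.PosSemidef) : 0 ≤ (A * B).trace.re := by
  open scoped MatrixOrder in
  obtain ⟨C, rfl⟩ := CStarAlgebra.nonneg_iff_eq_star_mul_self.mp hB.nonneg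
  rw [← Matrix.mul_assoc, trace_mul_comm, ← Matrix.mul_assoc]
  simpa [star_eq_conjTranspose] using (hA.mul_mul_conjTranspose_same C).re_trace_nonneg

end Matrix

section Tests

variable {ι : Type*} [DecidableEq ι]

lemma isTest_zero : IsTest (0 : Matrix ι ι ℂ) :=
  ⟨.zero, by simpa using .one⟩

lemma isTest_diagonal {d : ι → ℂ} (hd : ∀ i, 0 ≤ d i ∧ d i ≤ 1) : IsTest (diagonal d) := by
  refine ⟨posSemidef_diagonal_iff.mpr fun i => (hd i).1, ?_⟩
  rw [← diagonal_one, diagonal_sub]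
  exact posSemidef_diagonal_iff.mpr fun i => sub_nonneg.mpr (hd i).2

lemma IsTest.one_sub {T : Matrix ι ι ℂ} (hT : IsTest T) : IsTest (1 - T) :=
  ⟨hT.2, by simpa using hT.1⟩

lemma IsTest.re_diag_mem_Icc {T : Matrix ι ι ℂ} (hT : IsTest T) (i : ι) :
    (T i i).re ∈ Set.Icc 0 1 := by
  have h0 := Complex.nonneg_iff.mp (hT.1.diag_nonneg (i := i))
  have h1 := Complex.nonneg_iff.mp (hT.2.diag_nonneg (i := i))
  simp only [Matrix.sub_apply, one_apply_eq, Complex.sub_re, Complex.one_re] at h1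
  exact ⟨h0.1, by linarith [h1.1]⟩

variable [Fintype ι]

lemma IsTest.unitary_conj {T U : Matrix ι ι ℂ} (hT : IsTest T) (hU : U ∈ unitaryGroup ι ℂ) :
    IsTest (U * T * star U) := by
  have hconj : ∀ {A : Matrix ι ι ℂ}, A.PosSemidef → (U * A * star U).PosSemidef := fun hA => by
    simpa [star_eq_conjTranspose] using hA.mul_mul_conjTranspose_same U
  refine ⟨hconj hT.1, ?_⟩
  have h := hconj hT.2
  rwa [Matrix.mul_sub, Matrix.sub_mul, Matrix.mul_one, mem_unitaryGroup_iff.mp hU] at h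

lemma IsTest.re_trace_mul_le {T ρ : Matrix ι ι ℂ} (hT : IsTest T) (hρ : ρ.PosSemidef) :
    (T * ρ).trace.re ≤ ρ.trace.re := by
  have h := hT.2.re_trace_mul_nonneg hρ
  rw [Matrix.sub_mul, Matrix.one_mul, trace_sub, Complex.sub_re] at h
  linarith

end Tests

section SpectralProjection

variable {ι : Type*} [Fintype ι] [DecidableEq ι] {X : Matrix ι ι ℂ}

lemma nnProj_eq_conj (hX : X.IsHermitian) : nnProj X = (hX.eigenvectorUnitary : Matrix ι ι ℂ) *
    diagonal (fun i => if 0 ≤ hX.eigenvalues i then (1 : ℂ) else 0) *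
    star (hX.eigenvectorUnitary : Matrix ι ι ℂ) := by
  rw [nnProj, dif_pos hX]

lemma isTest_nnProj (hX : X.IsHermitian) : IsTest (nnProj X) := by
  rw [nnProj_eq_conj hX]
  refine (isTest_diagonal fun i => ?_).unitary_conj hX.eigenvectorUnitary.2
  split_ifs <;> simp

lemma trace_mul_eq_sum_eigenvalues (hX : X.IsHermitian) (M : Matrix ι ι ℂ) : (M * X).trace =
    ∑ i, (star (hX.eigenvectorUnitary : Matrix ι ι ℂ) * M * hX.eigenvectorUnitary) i i *
      (hX.eigenvalues i : ℂ) := by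
  conv_lhs => rw [hX.spectral_theorem, Unitary.conjStarAlgAut_apply, ← Matrix.mul_assoc,
    trace_mul_cycle, ← Matrix.mul_assoc]
  simp only [trace, diag_apply, mul_diagonal, Function.comp_apply]
  rfl

lemma star_eigenvectorUnitary_mul_nnProj_mul (hX : X.IsHermitian) :
    star (hX.eigenvectorUnitary : Matrix ι ι ℂ) * nnProj X * hX.eigenvectorUnitary =
      diagonal (fun i => if 0 ≤ hX.eigenvalues i then (1 : ℂ) else 0) := by
  simp only [nnProj_eq_conj hX, ← Matrix.mul_assoc, Unitary.coe_star_mul_self, Matrix.one_mul]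
  simp only [Matrix.mul_assoc, Unitary.coe_star_mul_self, Matrix.mul_one]

lemma re_trace_mul_le_re_trace_nnProj_mul (hX : X.IsHermitian) {T : Matrix ι ι ℂ}
    (hT : IsTest T) : (T * X).trace.re ≤ (nnProj X * X).trace.re := by
  simp only [trace_mul_eq_sum_eigenvalues hX, star_eigenvectorUnitary_mul_nnProj_mul hX,
    Complex.re_sum, diagonal_apply_eq, Complex.re_mul_ofReal]
  refine Finset.sum_le_sum fun i _ => ?_
  have ht := (hT.unitary_conj (Unitary.star_mem hX.eigenvectorUnitary.2)).re_diag_mem_Icc i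
  rw [star_star] at ht
  split_ifs with h
  · simpa using mul_le_of_le_one_left h ht.2
  · simpa using mul_nonpos_of_nonneg_of_nonpos ht.1 (not_le.mp h).le

lemma re_trace_nnProj_mul_nonneg (hX : X.IsHermitian) : 0 ≤ (nnProj X * X).trace.re := by
  simpa using re_trace_mul_le_re_trace_nnProj_mul hX isTest_zero

end SpectralProjection

section SpectralError

variable {ι : Type*} [Fintype ι] [DecidableEq ι] {ρ τ σ : Matrix ι ι ℂ}

lemma specErr_nonneg (hρ : ρ.PosSemidef) (hσ : σ.IsHermitian) (μ : ℝ) : 0 ≤ specErr ρ σ μ :=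
  (isTest_nnProj (hρ.1.sub_ofReal_smul hσ μ)).one_sub.1.re_trace_mul_nonneg hρ

lemma specErr_le_re_trace (hρ : ρ.PosSemidef) (hσ : σ.IsHermitian) (μ : ℝ) :
    specErr ρ σ μ ≤ ρ.trace.re :=
  (isTest_nnProj (hρ.1.sub_ofReal_smul hσ μ)).one_sub.re_trace_mul_le hρ

lemma specErr_add_le_of_isTest (hτ : τ.IsHermitian) (hσ : σ.IsHermitian) (μ : ℝ)
    {T : Matrix ι ι ℂ} (hT : IsTest T) :
    specErr τ σ μ + μ * (nnProj (τ - (μ : ℂ) • σ) * σ).trace.re ≤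
      ((1 - T) * τ).trace.re + μ * (T * σ).trace.re := by
  have h := re_trace_mul_le_re_trace_nnProj_mul (hτ.sub_ofReal_smul hσ μ) hT
  simp only [specErr, Matrix.mul_sub, Matrix.sub_mul, Matrix.one_mul, Matrix.mul_smul, trace_sub,
    trace_smul, Complex.sub_re, smul_eq_mul, Complex.re_ofReal_mul] at h ⊢
  linarith

lemma mul_re_trace_nnProj_mul_le (hρ : ρ.IsHermitian) (hσ : σ.IsHermitian) (μ : ℝ) :
    μ * (nnProj (ρ - (μ : ℂ) • σ) * σ).trace.re ≤ (nnProj (ρ - (μ : ℂ) • σ) * ρ).trace.re := by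
  have h := re_trace_nnProj_mul_nonneg (hρ.sub_ofReal_smul hσ μ)
  simp only [Matrix.mul_sub, Matrix.mul_smul, trace_sub, trace_smul, Complex.sub_re, smul_eq_mul,
    Complex.re_ofReal_mul] at h
  linarith

lemma specErr_le_of_le_smul {c μ μ' : ℝ} (hρ : ρ.PosSemidef) (hτ : τ.IsHermitian)
    (hσ : σ.PosSemidef) (hc : 0 < c) (hle : (ρ - c • τ).PosSemidef) (hμ : 0 < μ) (hμ' : 0 ≤ μ') :
    specErr τ σ μ' ≤ c⁻¹ * specErr ρ σ μ + μ' / μ * ρ.trace.re := by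
  set P := nnProj (ρ - (μ : ℂ) • σ)
  have hP : IsTest P := isTest_nnProj (hρ.1.sub_ofReal_smul hσ.1 μ)
  have hoptimal := specErr_add_le_of_isTest hτ hσ.1 μ' hP
  have hQσ := (isTest_nnProj (hτ.sub_ofReal_smul hσ.1 μ')).1.re_trace_mul_nonneg hσ
  have hdom : c * ((1 - P) * τ).trace.re ≤ specErr ρ σ μ := by
    have h := hP.one_sub.1.re_trace_mul_nonneg hle
    simp only [Matrix.mul_sub, Matrix.mul_smul, trace_sub, trace_smul, Complex.sub_re,
      Complex.real_smul, Complex.re_ofReal_mul] at h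
    rw [specErr]
    linarith
  have hPσ : μ * (P * σ).trace.re ≤ ρ.trace.re :=
    (mul_re_trace_nnProj_mul_le hρ.1 hσ.1 μ).trans (hP.re_trace_mul_le hρ)
  calc specErr τ σ μ'
      ≤ ((1 - P) * τ).trace.re + μ' * (P * σ).trace.re := by nlinarith
    _ ≤ c⁻¹ * specErr ρ σ μ + μ' * (ρ.trace.re / μ) := by
      gcongr ?_ + μ' * ?_
      · rwa [le_inv_mul_iff₀ hc]
      · rwa [le_div_iff₀' hμ]
    _ = c⁻¹ * specErr ρ σ μ + μ' / μ * ρ.trace.re := by ring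

end SpectralError

lemma tendsto_zero_of_limsup_nonpos {f : ℕ → ℝ} (h0 : ∀ n, 0 ≤ f n) (hb : BddAbove (Set.range f))
    (h : limsup f atTop ≤ 0) : Tendsto f atTop (𝓝 0) := by
  have habove : IsBoundedUnder (· ≤ ·) atTop f := hb.isBoundedUnder_of_range
  exact tendsto_of_le_liminf_of_limsup_le
    (le_liminf_of_le habove.isCoboundedUnder_ge (.of_forall h0)) h habove
    (isBoundedUnder_of ⟨0, h0⟩)

lemma EReal.sSup_image_coe_le_of_forall_lt_mem {S T : Set ℝ} (h : ∀ a ∈ S, ∀ b < a, b ∈ T) :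
    sSup ((↑) '' S : Set EReal) ≤ sSup ((↑) '' T) := by
  refine sSup_le ?_
  rintro _ ⟨a, ha, rfl⟩
  exact EReal.ge_of_forall_gt_iff_ge.mp fun b hb =>
    le_sSup ⟨b, h a ha b (EReal.coe_lt_coe_iff.mp hb), rfl⟩

section Sequences

variable {Hn : ℕ → Type*} [∀ n, Fintype (Hn n)] [∀ n, DecidableEq (Hn n)]
  {ρ τ σ : (n : ℕ) → Matrix (Hn n) (Hn n) ℂ} {c : ℝ}

lemma limsup_specErr_nonpos_of_le_smul (hρ : ∀ n, IsDensityOp (ρ n))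
    (hτ : ∀ n, IsDensityOp (τ n)) (hσ : ∀ n, (σ n).PosSemidef) (hc : 0 < c)
    (hle : ∀ n, (ρ n - c • τ n).PosSemidef) {a b : ℝ} (hba : b < a)
    (ha : limsup (fun n : ℕ => specErr (ρ n) (σ n) (Real.exp (n * a))) atTop ≤ 0) :
    limsup (fun n : ℕ => specErr (τ n) (σ n) (Real.exp (n * b))) atTop ≤ 0 := by
  have hρtr : ∀ n, (ρ n).trace.re = 1 := fun n => by simp [(hρ n).2]
  have hρerr := tendsto_zero_of_limsup_nonpos (fun n => specErr_nonneg (hρ n).1 (hσ n).1 _)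
    ⟨1, by rintro _ ⟨n, rfl⟩; simpa [hρtr] using specErr_le_re_trace (hρ n).1 (hσ n).1 _⟩ ha
  have hbound : ∀ n : ℕ, specErr (τ n) (σ n) (Real.exp (n * b)) ≤
      c⁻¹ * specErr (ρ n) (σ n) (Real.exp (n * a)) + Real.exp (b - a) ^ n := fun n => by
    have h := specErr_le_of_le_smul (hρ n).1 (hτ n).1.1 (hσ n) hc (hle n)
      (Real.exp_pos (n * a)) (Real.exp_pos (n * b)).le
    rwa [hρtr, mul_one, ← Real.exp_sub, ← mul_sub, Real.exp_nat_mul (b - a)] at h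
  have hgeom : Tendsto (fun n : ℕ => Real.exp (b - a) ^ n) atTop (𝓝 0) :=
    tendsto_pow_atTop_nhds_zero_of_lt_one (Real.exp_pos _).le
      (Real.exp_lt_one_iff.mpr (sub_neg.mpr hba))
  have hlim := squeeze_zero (fun n => specErr_nonneg (hτ n).1 (hσ n).1 _) hbound
    (by simpa using (hρerr.const_mul c⁻¹).add hgeom)
  exact hlim.limsup_eq.le

lemma Dlow_zero_le_of_le_smul (hρ : ∀ n, IsDensityOp (ρ n)) (hτ : ∀ n, IsDensityOp (τ n))
    (hσ : ∀ n, (σ n).PosSemidef) (hc : 0 < c) (hle : ∀ n, (ρ n - c • τ n).PosSemidef) :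
    Dlow 0 ρ σ ≤ Dlow 0 τ σ :=
  EReal.sSup_image_coe_le_of_forall_lt_mem fun _ ha _ hba =>
    limsup_specErr_nonpos_of_le_smul hρ hτ hσ hc hle hba ha

end Sequences

section TensorPower

variable {H : Type*} [Fintype H]

lemma tpow_conjTranspose_mul_self (B : Matrix H H ℂ) (n : ℕ) :
    tpow (Bᴴ * B) n = (tpow B n)ᴴ * tpow B n := by
  ext x y
  simp only [tpow, of_apply, Matrix.mul_apply, conjTranspose_apply, star_prod,
    Finset.prod_univ_sum, Fintype.piFinset_univ, Finset.prod_mul_distrib]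

lemma trace_tpow (A : Matrix H H ℂ) (n : ℕ) : (tpow A n).trace = A.trace ^ n := by
  simp only [trace, diag_apply, tpow, of_apply]
  rw [← Fin.prod_const, Fintype.prod_sum]

lemma IsDensityOp.tpow [DecidableEq H] {A : Matrix H H ℂ} (hA : IsDensityOp A) (n : ℕ) :
    IsDensityOp (tpow A n) := by
  refine ⟨?_, by rw [trace_tpow, hA.2, one_pow]⟩
  open scoped MatrixOrder in
  obtain ⟨B, hB⟩ := CStarAlgebra.nonneg_iff_eq_star_mul_self.mp hA.1.nonneg
  rw [hB, star_eq_conjTranspose, tpow_conjTranspose_mul_self]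
  exact posSemidef_conjTranspose_mul_self _

end TensorPower

section Mixture

variable {ι J : Type*} [Fintype J] {p : J → ℝ} {A : J → Matrix ι ι ℂ}

lemma posSemidef_sum_smul_sub_smul (hp : ∀ i, 0 ≤ p i) (hA : ∀ i, (A i).PosSemidef) (i : J) :
    (∑ j, p j • A j - p i • A i).PosSemidef := by
  classical
  rw [← Finset.add_sum_erase _ _ (Finset.mem_univ i), add_sub_cancel_left]
  exact posSemidef_sum _ fun j _ => (hA j).smul (hp j)

lemma IsDensityOp.sum_smul [Fintype ι] (hp : ∀ i, 0 ≤ p i) (hpsum : ∑ i, p i = 1)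
    (hA : ∀ i, IsDensityOp (A i)) : IsDensityOp (∑ i, p i • A i) := by
  refine ⟨posSemidef_sum _ fun i _ => (hA i).1.smul (hp i), ?_⟩
  simp [trace_sum, (hA _).2, Complex.real_smul, ← Complex.ofReal_sum, hpsum]

end Mixture

/-- **Converse part.** For the mixed source `ρ_n = Σ_i p_i ρ̄_i^{⊗n}` and an arbitrary
sequence `σ⃗` of density operators, `D̲(ρ⃗‖σ⃗) ≤ min_i D̲(ρ⃗_i‖σ⃗)`. -/
theorem stmt3 {H : Type*} [Fintype H] [DecidableEq H]
    {J : Type*} [Fintype J]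
    (p : J → ℝ) (hp : ∀ i, 0 < p i) (hpsum : ∑ i, p i = 1)
    (ρb : J → Matrix H H ℂ) (hρb : ∀ i, IsDensityOp (ρb i))
    (σ : (n : ℕ) → Matrix (Fin n → H) (Fin n → H) ℂ) (hσ : ∀ n, IsDensityOp (σ n)) :
    Dlow 0 (fun n => ∑ i, p i • tpow (ρb i) n) σ
      ≤ ⨅ i : J, Dlow 0 (fun n => tpow (ρb i) n) σ :=
  le_iInf fun i => Dlow_zero_le_of_le_smul
    (fun n => .sum_smul (fun j => (hp j).le) hpsum fun j => (hρb j).tpow n)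
    (fun n => (hρb i).tpow n) (fun n => (hσ n).1) (hp i)
    (fun n => posSemidef_sum_smul_sub_smul (fun j => (hp j).le) (fun j => ((hρb j).tpow n).1) i)
end
end

section
/- Let T be an operator on a finite-dimensional complex Hilbert space with 0 ≤ T ≤ I, let Π be an orthogonal projection, and let c ∈ [0,1] be a real number satisfying Π T Π ≤ c Π. Then for every density operator ρ on the same space, Tr[Tρ] ≤ (√(c · Tr[Πρ]) + √(1 − Tr[Πρ]))². -/
open Filter Matrix
open scoped Classical ComplexOrder

noncomputable section

/-! Split `1 = P + (1 - P)`. Writing `T = B* B`, the map `X ↦ √(Re Tr[X* T X ρ])` is the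
`ρ`-weighted Hilbert–Schmidt norm of `B X`, hence subadditive; applied to `P + (1 - P)` it gives
`√Tr[Tρ] ≤ √Tr[PTPρ] + √Tr[(1-P)T(1-P)ρ]`, and the two terms under the roots are at most
`c Tr[Pρ]` and `Tr[(1-P)ρ] = 1 - Tr[Pρ]`. -/

open scoped MatrixOrder

namespace Matrix

section

open RCLike

variable {n 𝕜 : Type*} [Fintype n] [RCLike 𝕜]

theorem PosSemidef.re_trace_mul_nonneg_s5 {A ρ : Matrix n n 𝕜} (hA : A.PosSemidef)
    (hρ : ρ.PosSemidef) : 0 ≤ re (A * ρ).trace := by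
  obtain ⟨B, rfl⟩ := CStarAlgebra.nonneg_iff_eq_star_mul_self.mp hA.nonneg
  rw [star_eq_conjTranspose, mul_assoc, trace_mul_comm]
  exact (nonneg_iff.mp (hρ.mul_mul_conjTranspose_same B).trace_nonneg).1

theorem re_trace_mul_le_of_posSemidef_sub {A B ρ : Matrix n n 𝕜} (hAB : (B - A).PosSemidef)
    (hρ : ρ.PosSemidef) : re (A * ρ).trace ≤ re (B * ρ).trace := by
  have h := hAB.re_trace_mul_nonneg_s5 hρ
  rwa [sub_mul, trace_sub, map_sub, sub_nonneg] at h

theorem re_trace_conj_add_le {T ρ : Matrix n n 𝕜} (hT : T.PosSemidef) (hρ : ρ.PosSemidef)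
    (X Y : Matrix n n 𝕜) :
    re ((X + Y)ᴴ * T * (X + Y) * ρ).trace ≤
      (√(re (Xᴴ * T * X * ρ).trace) + √(re (Yᴴ * T * Y * ρ).trace)) ^ 2 := by
  obtain ⟨B, rfl⟩ := CStarAlgebra.nonneg_iff_eq_star_mul_self.mp hT.nonneg
  let _ := ρ.toMatrixSeminormedAddCommGroup hρ
  have hnorm (Z : Matrix n n 𝕜) : re (Zᴴ * (star B * B) * Z * ρ).trace = ‖B * Z‖ ^ 2 := by
    have h : ‖B * Z‖ = √(re (B * Z * ρ * (B * Z)ᴴ).trace) := rfl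
    rw [h, Real.sq_sqrt (nonneg_iff.mp (hρ.mul_mul_conjTranspose_same _).trace_nonneg).1,
      trace_mul_comm (B * Z * ρ), conjTranspose_mul, star_eq_conjTranspose]
    simp only [mul_assoc]
  rw [hnorm, hnorm, hnorm, mul_add, Real.sqrt_sq (norm_nonneg _), Real.sqrt_sq (norm_nonneg _)]
  gcongr
  exact norm_add_le _ _

end

end Matrix

section

variable {ι : Type*} [Fintype ι] [DecidableEq ι]

theorem IsOrthProj.one_sub {P : Matrix ι ι ℂ} (hP : IsOrthProj P) : IsOrthProj (1 - P) :=
  ⟨isHermitian_one.sub hP.1, by rw [sub_mul, mul_sub, mul_sub, hP.2]; simp⟩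

theorem IsOrthProj.posSemidef_sub_mul_mul {P T : Matrix ι ι ℂ} (hP : IsOrthProj P)
    (hT : (1 - T).PosSemidef) : (P - P * T * P).PosSemidef := by
  have h := hT.conjTranspose_mul_mul_same P
  rwa [hP.1.eq, mul_sub, sub_mul, mul_one, hP.2] at h

end

theorem stmt5_general {ι : Type*} [Fintype ι] [DecidableEq ι]
    (T P : Matrix ι ι ℂ) (c : ℝ)
    (hT : IsTest T) (hP : IsOrthProj P)
    (hPTP : ((c : ℂ) • P - P * T * P).PosSemidef)
    (ρ : Matrix ι ι ℂ) (hρ : IsDensityOp ρ) :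
    (T * ρ).trace.re
      ≤ (Real.sqrt (c * (P * ρ).trace.re) + Real.sqrt (1 - (P * ρ).trace.re)) ^ 2 := by
  have hQ := hP.one_sub
  have hP_part : (Pᴴ * T * P * ρ).trace.re ≤ c * (P * ρ).trace.re := by
    simpa [hP.1.eq] using re_trace_mul_le_of_posSemidef_sub hPTP hρ.1
  have hQ_part : ((1 - P)ᴴ * T * (1 - P) * ρ).trace.re ≤ 1 - (P * ρ).trace.re := by
    simpa [hQ.1.eq, sub_mul, hρ.2] using
      re_trace_mul_le_of_posSemidef_sub (hQ.posSemidef_sub_mul_mul hT.2) hρ.1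
  calc (T * ρ).trace.re = ((P + (1 - P))ᴴ * T * (P + (1 - P)) * ρ).trace.re := by simp
    _ ≤ _ := re_trace_conj_add_le hT.1 hρ.1 P (1 - P)
    _ ≤ _ := by gcongr; exacts [hP_part, hQ_part]

/-- **Operator inequality from Cauchy–Schwarz.** If `0 ≤ T ≤ I`, `P` is an orthogonal
projection, `c ∈ [0,1]` and `P T P ≤ c P`, then for every density operator `ρ`,
`Tr[Tρ] ≤ (√(c Tr[Pρ]) + √(1 − Tr[Pρ]))²`. -/
theorem stmt5 {ι : Type*} [Fintype ι] [DecidableEq ι]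
    (T P : Matrix ι ι ℂ) (c : ℝ)
    (hT : IsTest T) (hP : IsOrthProj P)
    (hc0 : 0 ≤ c) (hc1 : c ≤ 1)
    (hPTP : ((c : ℂ) • P - P * T * P).PosSemidef)
    (ρ : Matrix ι ι ℂ) (hρ : IsDensityOp ρ) :
    (T * ρ).trace.re
      ≤ (Real.sqrt (c * (P * ρ).trace.re) + Real.sqrt (1 - (P * ρ).trace.re)) ^ 2 :=
  stmt5_general T P c hT hP hPTP ρ hρ
end
end

section
/- Let ρ be a density operator on a finite-dimensional complex Hilbert space and let Π₁, Π₂ be orthogonal projections on the same space. Then Tr[Π₁ρ] ≤ (√(Tr[Π₂ρ]) + √(Tr[Π₁(I − Π₂)ρ(I − Π₂)]))². -/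
open Filter Matrix
open scoped Classical ComplexOrder

noncomputable section

/-! The positive semidefinite `ρ` induces the seminorm `‖X‖ = √Tr[X ρ Xᴴ]` on matrices, in which
`Tr[P₁ρ] = ‖P₁‖²`. Splitting `P₁ = P₁P₂ + P₁(1 - P₂)`, the triangle inequality and the fact that
left multiplication by the projection `P₁` is a contraction give
`‖P₁‖ ≤ ‖P₂‖ + ‖P₁(1 - P₂)‖`, where `‖P₂‖² = Tr[P₂ρ]` and
`‖P₁(1 - P₂)‖² = Tr[P₁(1 - P₂)ρ(1 - P₂)]`. -/

theorem IsOrthProj.isStarProjection {n : Type*} [Fintype n] {P : Matrix n n ℂ}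
    (hP : IsOrthProj P) : IsStarProjection P :=
  ⟨hP.2, hP.1⟩

namespace Matrix

variable {n 𝕜 : Type*} [Fintype n] [RCLike 𝕜]

theorem IsStarProjection.trace_mul_mul_self {P : Matrix n n 𝕜} (hP : IsStarProjection P)
    (N : Matrix n n 𝕜) : (P * N * P).trace = (P * N).trace := by
  rw [trace_mul_comm, ← mul_assoc, hP.isIdempotentElem.eq]

theorem IsStarProjection.re_trace_mul_le [DecidableEq n] {P N : Matrix n n 𝕜}
    (hP : IsStarProjection P) (hN : N.PosSemidef) :
    RCLike.re (P * N).trace ≤ RCLike.re N.trace := by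
  have hQ := hP.one_sub
  have hQH : (1 - P)ᴴ = 1 - P := hQ.isSelfAdjoint
  have h := (RCLike.nonneg_iff.mp (hN.mul_mul_conjTranspose_same (1 - P)).trace_nonneg).1
  rw [hQH, hQ.trace_mul_mul_self, sub_mul, one_mul, trace_sub, map_sub] at h
  linarith

section SeminormOfPosSemidef

variable {M : Matrix n n 𝕜}

theorem norm_sq_eq_re_trace (hM : M.PosSemidef) (X : Matrix n n 𝕜) :
    letI := M.toMatrixSeminormedAddCommGroup hM
    ‖X‖ ^ 2 = RCLike.re (X * M * Xᴴ).trace := by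
  let := M.toMatrixInnerProductSpace hM
  exact norm_sq_eq_re_inner (𝕜 := 𝕜) X

theorem IsStarProjection.norm_sq_eq_re_trace_mul {P : Matrix n n 𝕜} (hM : M.PosSemidef)
    (hP : IsStarProjection P) :
    letI := M.toMatrixSeminormedAddCommGroup hM
    ‖P‖ ^ 2 = RCLike.re (P * M).trace := by
  rw [norm_sq_eq_re_trace hM, show Pᴴ = P from hP.isSelfAdjoint, hP.trace_mul_mul_self]

theorem IsStarProjection.norm_mul_sq_eq_re_trace {P : Matrix n n 𝕜} (hM : M.PosSemidef)
    (hP : IsStarProjection P) (X : Matrix n n 𝕜) :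
    letI := M.toMatrixSeminormedAddCommGroup hM
    ‖P * X‖ ^ 2 = RCLike.re (P * (X * M * Xᴴ)).trace := by
  rw [norm_sq_eq_re_trace hM, conjTranspose_mul, show Pᴴ = P from hP.isSelfAdjoint,
    show P * X * M * (Xᴴ * P) = P * (X * M * Xᴴ) * P by simp only [mul_assoc],
    hP.trace_mul_mul_self]

theorem IsStarProjection.norm_mul_le [DecidableEq n] {P : Matrix n n 𝕜} (hM : M.PosSemidef)
    (hP : IsStarProjection P) (X : Matrix n n 𝕜) :
    letI := M.toMatrixSeminormedAddCommGroup hM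
    ‖P * X‖ ≤ ‖X‖ := by
  let := M.toMatrixSeminormedAddCommGroup hM
  rw [← pow_le_pow_iff_left₀ (norm_nonneg _) (norm_nonneg _) two_ne_zero,
    hP.norm_mul_sq_eq_re_trace hM, norm_sq_eq_re_trace hM]
  exact hP.re_trace_mul_le (hM.mul_mul_conjTranspose_same X)

end SeminormOfPosSemidef

end Matrix

/-- **Cauchy–Schwarz estimate for two projections.** For a density operator `ρ` and
orthogonal projections `P₁, P₂`,
`Tr[P₁ρ] ≤ (√(Tr[P₂ρ]) + √(Tr[P₁(I−P₂)ρ(I−P₂)]))²`. -/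
theorem stmt6 {ι : Type*} [Fintype ι] [DecidableEq ι]
    (ρ P₁ P₂ : Matrix ι ι ℂ) (hρ : IsDensityOp ρ)
    (h1 : IsOrthProj P₁) (h2 : IsOrthProj P₂) :
    (P₁ * ρ).trace.re
      ≤ (Real.sqrt ((P₂ * ρ).trace.re)
          + Real.sqrt ((P₁ * (((1 : Matrix ι ι ℂ) - P₂) * ρ * ((1 : Matrix ι ι ℂ) - P₂))).trace.re)) ^ 2 := by
  obtain ⟨hρ, -⟩ := hρ
  have hP₁ := h1.isStarProjection
  have hP₂ := h2.isStarProjection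
  let := ρ.toMatrixSeminormedAddCommGroup hρ
  have hP₁ρ : (P₁ * ρ).trace.re = ‖P₁ * P₂ + P₁ * (1 - P₂)‖ ^ 2 := by
    rw [← mul_add, add_sub_cancel, mul_one, hP₁.norm_sq_eq_re_trace_mul hρ, RCLike.re_to_complex]
  have hP₂ρ : Real.sqrt (P₂ * ρ).trace.re = ‖P₂‖ := by
    rw [← RCLike.re_to_complex, ← hP₂.norm_sq_eq_re_trace_mul hρ, Real.sqrt_sq (norm_nonneg _)]
  have hP₁Qρ : Real.sqrt (P₁ * ((1 - P₂) * ρ * (1 - P₂))).trace.re = ‖P₁ * (1 - P₂)‖ := by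
    rw [← Real.sqrt_sq (norm_nonneg (P₁ * (1 - P₂))), hP₁.norm_mul_sq_eq_re_trace hρ,
      show (1 - P₂)ᴴ = 1 - P₂ from hP₂.one_sub.isSelfAdjoint, RCLike.re_to_complex]
  calc (P₁ * ρ).trace.re = ‖P₁ * P₂ + P₁ * (1 - P₂)‖ ^ 2 := hP₁ρ
    _ ≤ (‖P₁ * P₂‖ + ‖P₁ * (1 - P₂)‖) ^ 2 := by gcongr; exact norm_add_le _ _
    _ ≤ (‖P₂‖ + ‖P₁ * (1 - P₂)‖) ^ 2 := by gcongr; exact hP₁.norm_mul_le hρ P₂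
    _ = _ := by rw [hP₂ρ, hP₁Qρ]
end
end

section
/- Fix real constants d > R > 0. For each n, let J_n = {1, …, M_n} with M_n = ⌈e^{nR}⌉, let ρ_n be the uniform probability distribution on J_n, and let σ_n be the probability distribution assigning mass e^{−nd} to each point of J_n and the remaining mass 1 − M_n·e^{−nd} to one additional point outside J_n (which is a valid probability distribution for all sufficiently large n since d > R). For each i, let ρ⃗_i denote the constant sequence of point masses δ_i. Then, regarding these distributions as commuting (diagonal) density operators, the classical spectral inf-divergence rates satisfy D̲(ρ⃗‖σ⃗) = d − R and D̲(ρ⃗_i‖σ⃗) = d for every i; in particular D̲(ρ⃗‖σ⃗) < min_i D̲(ρ⃗_i‖σ⃗), so the worst-component lower bound on the spectral inf-divergence rate fails when the number of mixture components grows exponentially in n. -/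
open Filter Matrix
open scoped Classical ComplexOrder

noncomputable section

lemma sup_helper (c : ℝ) (S : Set ℝ) (h1 : ∀ a : ℝ, a < c → a ∈ S) (h2 : ∀ a ∈ S, a ≤ c) :
    sSup ((fun a : ℝ => (a : EReal)) '' S) = (c : EReal) := by
  apply le_antisymm
  · apply sSup_le
    rintro x ⟨a, ha, rfl⟩
    simpa using EReal.coe_le_coe_iff.mpr (h2 a ha)
  · apply le_of_forall_lt
    intro b hb
    obtain ⟨y, hy1, hy2⟩ := EReal.exists_between_coe_real hb
    exact lt_of_lt_of_le hy1 (le_sSup ⟨y, h1 y (by exact_mod_cast hy2), rfl⟩)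

lemma limsup_eventually_const {f : ℕ → ℝ} {c : ℝ} (h : ∀ᶠ n in atTop, f n = c) :
    limsup f atTop = c := by
  rw [Filter.limsup_congr h, limsup_const]


/-- **A classical counterexample with exponentially many mixture components.**
Fix `d > R > 0`, let `M_n = ⌈e^{nR}⌉`, let `ρ_n` be uniform on `J_n = {1,…,M_n}`, let
`σ_n` give mass `e^{−nd}` to each point of `J_n` and the remaining mass to the extra
point `0`, and let `ρ⃗_i` be the constant sequence of point masses at `i`. Then
`D̲(ρ⃗‖σ⃗) = d − R` and `D̲(ρ⃗_i‖σ⃗) = d` for every `i ∈ J_n`; in particular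
`D̲(ρ⃗‖σ⃗) < min_i D̲(ρ⃗_i‖σ⃗)`. -/
theorem stmt17 (d R : ℝ) (hR : 0 < R) (hdR : R < d)
    (M : ℕ → ℕ) (hM : ∀ n, M n = ⌈Real.exp (n * R)⌉₊)
    (ρ : ℕ → ℕ → ℝ)
    (hρ : ∀ n x, ρ n x = if 1 ≤ x ∧ x ≤ M n then ((M n : ℝ))⁻¹ else 0)
    (σ : ℕ → ℕ → ℝ)
    (hσ : ∀ n x, σ n x =
      if 1 ≤ x ∧ x ≤ M n then Real.exp (-(n * d))
      else if x = 0 then 1 - (M n : ℝ) * Real.exp (-(n * d)) else 0)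
    (ρi : ℕ → ℕ → ℕ → ℝ)
    (hρi : ∀ i n x, ρi i n x = if x = i then 1 else 0) :
    cDlow ρ σ = ((d - R : ℝ) : EReal)
    ∧ (∀ i : ℕ, 1 ≤ i → cDlow (ρi i) σ = ((d : ℝ) : EReal))
    ∧ cDlow ρ σ < ⨅ i ∈ Set.Ici 1, cDlow (ρi i) σ := by
  -- basic facts about M
  have hMlb : ∀ n : ℕ, Real.exp (n * R) ≤ (M n : ℝ) := fun n => by
    rw [hM]; exact Nat.le_ceil _
  have hM1 : ∀ n, 1 ≤ M n := fun n => by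
    rw [hM]; exact Nat.one_le_ceil_iff.mpr (Real.exp_pos _)
  have hMpos : ∀ n, (0 : ℝ) < (M n : ℝ) := fun n => by
    exact_mod_cast hM1 n
  have hMub : ∀ n : ℕ, (M n : ℝ) < Real.exp (n * R) + 1 := fun n => by
    rw [hM]; exact Nat.ceil_lt_add_one (Real.exp_pos _).le
  have hexp : ∀ (n : ℕ) (a : ℝ),
      Real.exp (n * a) * Real.exp (-(n * d)) = (Real.exp (n * (d - a)))⁻¹ := by
    intro n a
    rw [← Real.exp_add, ← Real.exp_neg]
    congr 1; ring
  -- Part 1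
  have part1 : cDlow ρ σ = ((d - R : ℝ) : EReal) := by
    unfold cDlow
    apply sup_helper
    · -- a < d - R : sum eventually 0
      intro a ha
      apply limsup_eventually_const
      have hδ : 0 < d - a - R := by linarith
      have hev : ∀ᶠ n : ℕ in atTop, Real.log 2 / (d - a - R) ≤ (n : ℝ) :=
        tendsto_natCast_atTop_atTop.eventually_ge_atTop _
      filter_upwards [hev] with n hn
      -- key bound : M n ≤ exp (n (d - a))
      have h2 : (2 : ℝ) ≤ Real.exp (↑n * (d - a - R)) := by
        rw [← Real.exp_log (by norm_num : (0 : ℝ) < 2)]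
        apply Real.exp_le_exp.mpr
        rw [div_le_iff₀ hδ] at hn
        linarith
      have hB : (1 : ℝ) ≤ Real.exp (↑n * R) :=
        Real.one_le_exp (by positivity)
      have hkey : (M n : ℝ) ≤ Real.exp (↑n * (d - a)) := by
        have hprod : Real.exp (↑n * (d - a - R)) * Real.exp (↑n * R)
            = Real.exp (↑n * (d - a)) := by
          rw [← Real.exp_add]; congr 1; ring
        nlinarith [hMub n, Real.exp_pos ((n : ℝ) * R)]
      -- conclude : each term of sum is zero
      have hfun : (fun x : ℕ => if ρ n x < Real.exp (↑n * a) * σ n x then ρ n x else 0)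
          = fun _ => (0 : ℝ) := by
        funext x
        by_cases hx : 1 ≤ x ∧ x ≤ M n
        · rw [hρ, hσ, if_pos hx, if_pos hx, if_neg]
          rw [hexp, not_lt]
          exact inv_anti₀ (hMpos n) hkey
        · rw [hρ, if_neg hx, ite_self]
      rw [hfun, tsum_zero]
    · -- a ∈ S → a ≤ d - R
      intro a ha
      by_contra hcon
      push_neg at hcon
      have hone : limsup
          (fun n : ℕ => ∑' x : ℕ, if ρ n x < Real.exp (↑n * a) * σ n x then ρ n x else 0)
          atTop = 1 := by
        apply limsup_eventually_const
        filter_upwards [eventually_ge_atTop 1] with n hn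
        have hnpos : (0 : ℝ) < (n : ℝ) := by exact_mod_cast hn
        have hkey : Real.exp (↑n * (d - a)) < (M n : ℝ) :=
          lt_of_lt_of_le (Real.exp_lt_exp.mpr (by nlinarith)) (hMlb n)
        have hfun : (fun x : ℕ => if ρ n x < Real.exp (↑n * a) * σ n x then ρ n x else 0)
            = fun x => if 1 ≤ x ∧ x ≤ M n then ((M n : ℝ))⁻¹ else 0 := by
          funext x
          by_cases hx : 1 ≤ x ∧ x ≤ M n
          · have hc : ((M n : ℝ))⁻¹ < Real.exp (↑n * a) * Real.exp (-(↑n * d)) := by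
              rw [hexp]
              exact inv_strictAnti₀ (Real.exp_pos _) hkey
            simp [hρ, hσ, hx, hc]
          · simp [hρ, hx]
        rw [hfun, tsum_eq_sum (s := Finset.Icc 1 (M n))
          (fun x hx => if_neg (by simpa [Finset.mem_Icc] using hx))]
        rw [Finset.sum_congr rfl (fun x hx => if_pos (Finset.mem_Icc.mp hx)),
          Finset.sum_const, Nat.card_Icc]
        simp only [Nat.add_sub_cancel, nsmul_eq_mul]
        exact mul_inv_cancel₀ (hMpos n).ne'
      rw [ha] at hone
      norm_num at hone
  -- Part 2
  have part2 : ∀ i : ℕ, 1 ≤ i → cDlow (ρi i) σ = ((d : ℝ) : EReal) := by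
    intro i hi
    unfold cDlow
    apply sup_helper
    · intro a ha
      apply limsup_eventually_const
      apply Filter.Eventually.of_forall
      intro n
      have hfun : (fun x : ℕ => if ρi i n x < Real.exp (↑n * a) * σ n x then ρi i n x else 0)
          = fun _ => (0 : ℝ) := by
        funext x
        by_cases hxi : x = i
        · subst hxi
          rw [hρi, if_pos rfl, if_neg]
          have hσle : σ n x ≤ Real.exp (-(↑n * d)) := by
            rw [hσ]
            split_ifs with h1 h2
            · exact le_rfl
            · omega
            · exact (Real.exp_pos _).le
          have : Real.exp (↑n * a) * σ n x ≤ 1 := by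
            calc Real.exp (↑n * a) * σ n x ≤ Real.exp (↑n * a) * Real.exp (-(↑n * d)) := by
                  exact mul_le_mul_of_nonneg_left hσle (Real.exp_pos _).le
              _ = Real.exp (↑n * a + -(↑n * d)) := by rw [Real.exp_add]
              _ ≤ 1 := Real.exp_le_one_iff.mpr (by nlinarith [Nat.cast_nonneg (α := ℝ) n])
          linarith
        · rw [hρi, if_neg hxi, ite_self]
      rw [hfun, tsum_zero]
    · intro a ha
      by_contra hcon
      push_neg at hcon
      have hone : limsup
          (fun n : ℕ => ∑' x : ℕ, if ρi i n x < Real.exp (↑n * a) * σ n x then ρi i n x else 0)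
          atTop = 1 := by
        apply limsup_eventually_const
        have htend : Tendsto (fun n : ℕ => Real.exp (↑n * R)) atTop atTop :=
          Real.tendsto_exp_atTop.comp (tendsto_natCast_atTop_atTop.atTop_mul_const hR)
        filter_upwards [eventually_ge_atTop 1, htend.eventually_ge_atTop (i : ℝ)] with n hn hin
        have hnpos : (0 : ℝ) < (n : ℝ) := by exact_mod_cast hn
        have hiM : i ≤ M n := by
          have : (i : ℝ) ≤ (M n : ℝ) := le_trans hin (hMlb n)
          exact_mod_cast this
        have hfun : (fun x : ℕ => if ρi i n x < Real.exp (↑n * a) * σ n x then ρi i n x else 0)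
            = fun x => if x = i then (1 : ℝ) else 0 := by
          funext x
          by_cases hxi : x = i
          · subst hxi
            have hσi : σ n x = Real.exp (-(↑n * d)) := by
              rw [hσ, if_pos ⟨hi, hiM⟩]
            have hc : (1 : ℝ) < Real.exp (↑n * a) * σ n x := by
              rw [hσi, ← Real.exp_add]
              exact Real.one_lt_exp_iff.mpr (by nlinarith)
            simp [hρi, hc]
          · simp [hρi, hxi]
        rw [hfun, tsum_ite_eq]
      rw [ha] at hone
      norm_num at hone
  -- Part 3
  refine ⟨part1, part2, ?_⟩
  have hinf : (⨅ i ∈ Set.Ici 1, cDlow (ρi i) σ) = ((d : ℝ) : EReal) := by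
    apply le_antisymm
    · exact le_of_le_of_eq (iInf₂_le 1 (Set.mem_Ici.mpr le_rfl)) (part2 1 le_rfl)
    · exact le_iInf₂ fun i hi => (part2 i hi).ge
  rw [part1, hinf]
  exact_mod_cast sub_lt_self d hR
end
end
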